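/- Let G be a finite simple graph with maximum degree at most D that contains no clique on D+1 vertices, let D = α_1 + ... + α_{c+1} where each α_i ≥ 2 is an integer, let ξ ∈ Ω, and suppose ξ has at least one large clique. Let C₁ be a large clique of color i under ξ, let j ≠ i be another color, and let G_{ij} be the induced subgraph of G on the set of all vertices colored i or j by ξ. Then the connected component of G_{ij} containing C₁ is a complete graph on α_i + α_j + 1 vertices. -/
import Mathlib

open scoped Classical
open Finset
set_option linter.unusedSectionVars false

/-- The number of edges of `G` both of whose endpoints have color `i` under `ξ`. -/
noncomputable def monoEdges {V : Type*} [Fintype V] [DecidableEq V] (G : SimpleGraph V)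
    [DecidableRel G.Adj] {k : ℕ} (ξ : V → Fin k) (i : Fin k) : ℕ :=
  (G.edgeFinset.filter fun e => ∀ v ∈ e, ξ v = i).card

/-- `Φ(ξ) = Σ_i f_i(ξ)/α_i` as a rational number. -/
noncomputable def Phi {V : Type*} [Fintype V] [DecidableEq V] (G : SimpleGraph V)
    [DecidableRel G.Adj] {k : ℕ} (α : Fin k → ℕ) (ξ : V → Fin k) : ℚ :=
  ∑ i, (monoEdges G ξ i : ℚ) / (α i : ℚ)

section Base
variable {V : Type*} [Fintype V] [DecidableEq V] (G : SimpleGraph V) [DecidableRel G.Adj]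
variable {k : ℕ}

/-- neighbors of `x` of color `m` -/
noncomputable def colNbr (ζ : V → Fin k) (x : V) (m : Fin k) : Finset V :=
  (G.neighborFinset x).filter (fun y => ζ y = m)

noncomputable def cdeg (ζ : V → Fin k) (x : V) (m : Fin k) : ℕ := (colNbr G ζ x m).card

variable {G}

lemma mem_colNbr {ζ : V → Fin k} {x y : V} {m : Fin k} :
    y ∈ colNbr G ζ x m ↔ G.Adj x y ∧ ζ y = m := by
  simp [colNbr]

lemma not_self_mem_colNbr {ζ : V → Fin k} {x : V} {m : Fin k} : x ∉ colNbr G ζ x m := by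
  simp [mem_colNbr]

lemma colNbr_update_self (ζ : V → Fin k) (x : V) (k₀ m : Fin k) :
    colNbr G (Function.update ζ x k₀) x m = colNbr G ζ x m := by
  ext y
  simp only [mem_colNbr, and_congr_right_iff]
  intro hadj
  rw [Function.update_of_ne (G.ne_of_adj hadj).symm]

lemma sum_cdeg (ζ : V → Fin k) (x : V) : ∑ m, cdeg G ζ x m = G.degree x := by
  classical
  rw [← SimpleGraph.card_neighborFinset_eq_degree]
  rw [Finset.card_eq_sum_card_fiberwise (f := ζ) (t := Finset.univ) (fun y _ => mem_univ _)]
  simp [cdeg, colNbr]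

lemma monoEdges_split (ζ : V → Fin k) (x : V) (m : Fin k) :
    monoEdges G ζ m
      = ((G.edgeFinset.filter fun e => x ∉ e).filter fun e => ∀ v ∈ e, ζ v = m).card
        + (if ζ x = m then cdeg G ζ x m else 0) := by
  classical
  have h1 : monoEdges G ζ m
      = ((G.edgeFinset.filter fun e => ∀ v ∈ e, ζ v = m).filter fun e => x ∉ e).card
        + ((G.edgeFinset.filter fun e => ∀ v ∈ e, ζ v = m).filter fun e => x ∈ e).card := by
    unfold monoEdges
    rw [add_comm]
    rw [← Finset.card_filter_add_card_filter_not (p := fun e => x ∈ e)]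
  rw [h1]
  congr 1
  · rw [Finset.filter_comm]
  · by_cases hx : ζ x = m
    · simp only [hx, if_true]
      rw [eq_comm]
      apply Finset.card_bij (fun y _ => s(x, y))
      · intro y hy
        rw [mem_colNbr] at hy
        simp only [Finset.mem_filter, SimpleGraph.mem_edgeFinset, SimpleGraph.mem_edgeSet]
        refine ⟨⟨hy.1, ?_⟩, ?_⟩
        · intro v hv
          rcases Sym2.mem_iff.1 hv with rfl | rfl
          · exact hx
          · exact hy.2
        · exact Sym2.mem_mk_left _ _
      · intro y hy y' hy' hEq
        rw [mem_colNbr] at hy hy'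
        rcases Sym2.eq_iff.1 hEq with ⟨_, h⟩ | ⟨h1, h2⟩
        · exact h
        · exact absurd h1 (G.ne_of_adj hy'.1)
      · intro e he
        simp only [Finset.mem_filter, SimpleGraph.mem_edgeFinset] at he
        obtain ⟨⟨hee, hmono⟩, hxe⟩ := he
        obtain ⟨y, rfl⟩ := Sym2.mem_iff_exists.mp hxe
        rw [SimpleGraph.mem_edgeSet] at hee
        refine ⟨y, ?_, rfl⟩
        rw [mem_colNbr]
        exact ⟨hee, hmono y (Sym2.mem_mk_right _ _)⟩
    · simp only [hx, if_false]
      rw [Finset.card_eq_zero]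
      rw [Finset.filter_eq_empty_iff]
      intro e he hxe
      rw [Finset.mem_filter] at he
      exact hx (he.2 x hxe)
end Base

section Base2
variable {V : Type*} [Fintype V] [DecidableEq V] {G : SimpleGraph V} [DecidableRel G.Adj]
variable {k : ℕ} {α : Fin k → ℕ}

lemma away_congr {ζ ζ' : V → Fin k} {x : V} (h : ∀ y, y ≠ x → ζ y = ζ' y) (m : Fin k) :
    ((G.edgeFinset.filter fun e => x ∉ e).filter fun e => ∀ v ∈ e, ζ v = m)
      = ((G.edgeFinset.filter fun e => x ∉ e).filter fun e => ∀ v ∈ e, ζ' v = m) := by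
  apply Finset.filter_congr
  intro e he
  rw [Finset.mem_filter] at he
  constructor
  · intro hm v hv
    rw [← h v (fun hvx => he.2 (hvx ▸ hv))]
    exact hm v hv
  · intro hm v hv
    rw [h v (fun hvx => he.2 (hvx ▸ hv))]
    exact hm v hv

lemma monoEdges_update (ζ : V → Fin k) (x : V) (k₀ m : Fin k) :
    monoEdges G (Function.update ζ x k₀) m
      = ((G.edgeFinset.filter fun e => x ∉ e).filter fun e => ∀ v ∈ e, ζ v = m).card
        + (if k₀ = m then cdeg G ζ x m else 0) := by
  rw [monoEdges_split _ x]
  congr 1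
  · congr 1
    exact (away_congr (fun y hy => (Function.update_of_ne hy _ _).symm) m).symm
  · rw [Function.update_self]
    by_cases h : k₀ = m
    · simp only [h, if_true]
      unfold cdeg
      rw [colNbr_update_self]
    · simp [h]

lemma Phi_update {ζ : V → Fin k} {x : V} {k₀ : Fin k} (hα : ∀ m, 1 ≤ α m) (hk : k₀ ≠ ζ x) :
    Phi G α (Function.update ζ x k₀)
      = Phi G α ζ + (cdeg G ζ x k₀ : ℚ)/(α k₀ : ℚ) - (cdeg G ζ x (ζ x) : ℚ)/(α (ζ x) : ℚ) := by
  have key : ∀ m, (monoEdges G (Function.update ζ x k₀) m : ℚ)/(α m : ℚ)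
      = (monoEdges G ζ m : ℚ)/(α m : ℚ)
        + (if m = k₀ then (cdeg G ζ x k₀ : ℚ)/(α k₀ : ℚ) else 0)
        - (if m = ζ x then (cdeg G ζ x (ζ x) : ℚ)/(α (ζ x) : ℚ) else 0) := by
    intro m
    have h1 := monoEdges_update (G := G) ζ x k₀ m
    have h2 := monoEdges_split (G := G) ζ x m
    by_cases e1 : m = k₀
    · subst e1
      rw [if_pos rfl, if_neg hk]
      rw [if_pos rfl] at h1
      rw [if_neg (fun h : ζ x = m => hk h.symm), add_zero] at h2
      rw [h1, h2]
      push_cast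
      ring
    · rw [if_neg e1]
      by_cases e2 : m = ζ x
      · rw [if_pos e2, add_zero]
        rw [if_neg (fun h : k₀ = m => e1 h.symm), add_zero] at h1
        rw [if_pos e2.symm] at h2
        rw [← e2]
        have hQ : (monoEdges G ζ m : ℚ) = (monoEdges G (Function.update ζ x k₀) m : ℚ)
            + (cdeg G ζ x m : ℚ) := by
          rw [h1, h2]; push_cast; ring
        rw [hQ]
        ring
      · rw [if_neg (fun h : k₀ = m => e1 h.symm), add_zero] at h1
        rw [if_neg (fun h : ζ x = m => e2 h.symm), add_zero] at h2
        rw [if_neg e2, add_zero, h1, h2]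
        ring
  unfold Phi
  rw [Finset.sum_congr rfl (fun m _ => key m)]
  rw [Finset.sum_sub_distrib, Finset.sum_add_distrib]
  rw [Finset.sum_ite_eq' Finset.univ k₀ (fun _ => (cdeg G ζ x k₀ : ℚ)/(α k₀ : ℚ))]
  rw [Finset.sum_ite_eq' Finset.univ (ζ x) (fun _ => (cdeg G ζ x (ζ x) : ℚ)/(α (ζ x) : ℚ))]
  simp

lemma min_ineq {ζ : V → Fin k} (hα : ∀ m, 1 ≤ α m)
    (hminζ : ∀ ψ, Phi G α ζ ≤ Phi G α ψ) (x : V) (k₀ : Fin k) (hk : k₀ ≠ ζ x) :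
    (cdeg G ζ x (ζ x) : ℚ)/(α (ζ x) : ℚ) ≤ (cdeg G ζ x k₀ : ℚ)/(α k₀ : ℚ) := by
  have h := hminζ (Function.update ζ x k₀)
  rw [Phi_update hα hk] at h
  linarith

lemma min_ineq_nat {ζ : V → Fin k} (hα : ∀ m, 1 ≤ α m)
    (hminζ : ∀ ψ, Phi G α ζ ≤ Phi G α ψ) (x : V) (k₀ : Fin k) (hk : k₀ ≠ ζ x) :
    cdeg G ζ x (ζ x) * α k₀ ≤ cdeg G ζ x k₀ * α (ζ x) := by
  have h := min_ineq hα hminζ x k₀ hk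
  have p1 : (0:ℚ) < (α (ζ x) : ℚ) := by exact_mod_cast hα (ζ x)
  have p2 : (0:ℚ) < (α k₀ : ℚ) := by exact_mod_cast hα k₀
  rw [div_le_div_iff₀ p1 p2] at h
  exact_mod_cast h

lemma cdeg_own_le {D : ℕ} {ζ : V → Fin k} (hα : ∀ m, 1 ≤ α m) (hsum : ∑ m, α m = D)
    (hdeg : ∀ v, G.degree v ≤ D) (hminζ : ∀ ψ, Phi G α ζ ≤ Phi G α ψ) (x : V) :
    cdeg G ζ x (ζ x) ≤ α (ζ x) := by
  by_contra hcon
  push_neg at hcon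
  have hall : ∀ m, α m + 1 ≤ cdeg G ζ x m := by
    intro m
    by_cases hm : m = ζ x
    · subst hm; omega
    · have h := min_ineq_nat hα hminζ x m hm
      have h2 : (α (ζ x) + 1) * α m ≤ cdeg G ζ x m * α (ζ x) :=
        le_trans (Nat.mul_le_mul_right _ hcon) h
      nlinarith [hα m, hα (ζ x)]
  have hsum2 : ∑ m, (α m + 1) ≤ ∑ m, cdeg G ζ x m :=
    Finset.sum_le_sum (fun m _ => hall m)
  rw [sum_cdeg] at hsum2
  rw [Finset.sum_add_distrib] at hsum2
  have hd := hdeg x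
  have hk0 : 0 < k := Fin.pos (ζ x)
  simp only [Finset.sum_const, Finset.card_univ, Fintype.card_fin, smul_eq_mul, mul_one] at hsum2
  omega

/-- profile of a vertex in a large clique of a Φ-minimal coloring -/
lemma clique_profile {D : ℕ} {ζ : V → Fin k} (hα : ∀ m, 1 ≤ α m) (hsum : ∑ m, α m = D)
    (hdeg : ∀ v, G.degree v ≤ D) (hminζ : ∀ ψ, Phi G α ζ ≤ Phi G α ψ)
    {C : Finset V} {m : Fin k} (hC : G.IsNClique (α m + 1) C) (hmono : ∀ v ∈ C, ζ v = m)
    {x : V} (hx : x ∈ C) :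
    ζ x = m ∧ colNbr G ζ x m = C.erase x ∧ (∀ k₀, cdeg G ζ x k₀ = α k₀) := by
  have hζx : ζ x = m := hmono x hx
  have hsub : C.erase x ⊆ colNbr G ζ x m := by
    intro y hy
    rw [Finset.mem_erase] at hy
    rw [mem_colNbr]
    exact ⟨(hC.1 (by exact_mod_cast hx) (by exact_mod_cast hy.2) (fun h => hy.1 h.symm)),
      hmono y hy.2⟩
  have hcarde : (C.erase x).card = α m := by
    rw [Finset.card_erase_of_mem hx, hC.2]
    omega
  have hle : α m ≤ cdeg G ζ x m := by
    rw [← hcarde]; exact Finset.card_le_card hsub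
  have hge : cdeg G ζ x m ≤ α m := hζx ▸ cdeg_own_le hα hsum hdeg hminζ x
  have hcards : cdeg G ζ x m = α m := le_antisymm hge hle
  have hset : colNbr G ζ x m = C.erase x := by
    symm
    apply Finset.eq_of_subset_of_card_le hsub
    rw [hcarde]; exact hge
  refine ⟨hζx, hset, ?_⟩
  have hallge : ∀ k₀, α k₀ ≤ cdeg G ζ x k₀ := by
    intro k₀
    by_cases hk : k₀ = ζ x
    · subst hk
      rw [hζx, hcards]
    · have h := min_ineq_nat hα hminζ x k₀ hk
      rw [hζx, hcards] at h
      have hm1 := hα m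
      nlinarith
  by_contra hcon
  push_neg at hcon
  obtain ⟨k', hk'⟩ := hcon
  have hlt : α k' < cdeg G ζ x k' := lt_of_le_of_ne (hallge k') (fun h => hk' h.symm)
  have : ∑ m', α m' < ∑ m', cdeg G ζ x m' :=
    Finset.sum_lt_sum (fun m' _ => hallge m') ⟨k', Finset.mem_univ _, hlt⟩
  rw [sum_cdeg, hsum] at this
  exact absurd (hdeg x) (by omega)

end Base2

/-- A *large clique* of the coloring `ξ`: a set of `α_i + 1` pairwise adjacent vertices all of
color `i`, for some color `i`. -/
def IsLargeClique {V : Type*} (G : SimpleGraph V) {k : ℕ} (α : Fin k → ℕ)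
    (ξ : V → Fin k) (s : Finset V) : Prop :=
  ∃ i : Fin k, G.IsNClique (α i + 1) s ∧ ∀ v ∈ s, ξ v = i

/-- `φ(ξ)`: the number of large cliques of the coloring `ξ`. -/
noncomputable def numLargeCliques {V : Type*} (G : SimpleGraph V) {k : ℕ}
    (α : Fin k → ℕ) (ξ : V → Fin k) : ℕ :=
  Set.ncard {s : Finset V | IsLargeClique G α ξ s}

section Cliques
variable {V : Type*} [Fintype V] [DecidableEq V] {G : SimpleGraph V} [DecidableRel G.Adj]
variable {k : ℕ} {α : Fin k → ℕ}

lemma isLargeClique_congr {ζ ζ' : V → Fin k} {s : Finset V} (h : ∀ v ∈ s, ζ v = ζ' v) :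
    IsLargeClique G α ζ s → IsLargeClique G α ζ' s := by
  rintro ⟨m, hC, hmono⟩
  exact ⟨m, hC, fun v hv => (h v hv) ▸ hmono v hv⟩

lemma LC_color {ζ : V → Fin k} {s : Finset V} (h : IsLargeClique G α ζ s) {x : V}
    (hx : x ∈ s) : G.IsNClique (α (ζ x) + 1) s ∧ ∀ v ∈ s, ζ v = ζ x := by
  obtain ⟨m, hC, hmono⟩ := h
  have : ζ x = m := hmono x hx
  subst this
  exact ⟨hC, hmono⟩

lemma LC_eq_fan {D : ℕ} (hα1 : ∀ m, 1 ≤ α m) (hsum : ∑ m, α m = D)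
    (hdeg : ∀ v, G.degree v ≤ D) {ζ : V → Fin k} (hminζ : ∀ ψ, Phi G α ζ ≤ Phi G α ψ)
    {s : Finset V} (hs : IsLargeClique G α ζ s) {x : V} (hx : x ∈ s) :
    s = insert x (colNbr G ζ x (ζ x)) := by
  obtain ⟨hC, hmono⟩ := LC_color hs hx
  have prof := clique_profile hα1 hsum hdeg hminζ hC hmono hx
  rw [prof.2.1]
  exact (Finset.insert_erase hx).symm

lemma LC_unique {D : ℕ} (hα1 : ∀ m, 1 ≤ α m) (hsum : ∑ m, α m = D)
    (hdeg : ∀ v, G.degree v ≤ D) {ζ : V → Fin k} (hminζ : ∀ ψ, Phi G α ζ ≤ Phi G α ψ)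
    {s t : Finset V} (hs : IsLargeClique G α ζ s) (ht : IsLargeClique G α ζ t) {x : V}
    (hxs : x ∈ s) (hxt : x ∈ t) : s = t := by
  rw [LC_eq_fan hα1 hsum hdeg hminζ hs hxs, LC_eq_fan hα1 hsum hdeg hminζ ht hxt]

lemma numLC_split (ζ : V → Fin k) (x : V) :
    numLargeCliques G α ζ
      = ({s : Finset V | IsLargeClique G α ζ s ∧ x ∈ s}).ncard
        + ({s : Finset V | IsLargeClique G α ζ s ∧ x ∉ s}).ncard := by
  rw [numLargeCliques, ← Set.ncard_union_eq ?_ (Set.toFinite _) (Set.toFinite _)]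
  · congr 1
    ext s
    by_cases hx : x ∈ s <;> simp [hx]
  · rw [Set.disjoint_left]
    rintro s ⟨-, h1⟩ ⟨-, h2⟩
    exact h2 h1

/-- The main flip lemma: flipping a vertex of a large clique to another color preserves
membership in `Ω` and creates a large clique on the fan. -/
lemma flip_good {D : ℕ} (hα1 : ∀ m, 1 ≤ α m) (hsum : ∑ m, α m = D)
    (hdeg : ∀ v, G.degree v ≤ D) {ξ : V → Fin k}
    (hphimin : ∀ ψ, (∀ χ, Phi G α ψ ≤ Phi G α χ) →
      numLargeCliques G α ξ ≤ numLargeCliques G α ψ)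
    {ζ : V → Fin k} (hgmin : ∀ ψ, Phi G α ζ ≤ Phi G α ψ)
    (hgnum : numLargeCliques G α ζ = numLargeCliques G α ξ)
    {C : Finset V} (hC : IsLargeClique G α ζ C) {x : V} (hx : x ∈ C) {k₀ : Fin k}
    (hk : k₀ ≠ ζ x) :
    (∀ ψ, Phi G α (Function.update ζ x k₀) ≤ Phi G α ψ)
    ∧ numLargeCliques G α (Function.update ζ x k₀) = numLargeCliques G α ξ
    ∧ IsLargeClique G α (Function.update ζ x k₀) (insert x (colNbr G ζ x k₀)) := by
  obtain ⟨hCc, hmono⟩ := LC_color hC hx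
  have prof := clique_profile hα1 hsum hdeg hgmin hCc hmono hx
  set ζ' := Function.update ζ x k₀ with hζ'
  -- Phi equality
  have hPhiEq : Phi G α ζ' = Phi G α ζ := by
    rw [Phi_update hα1 hk, prof.2.2 k₀, prof.2.2 (ζ x)]
    have h1 : ((α k₀ : ℚ)) ≠ 0 := by
      have := hα1 k₀; positivity
    have h2 : ((α (ζ x) : ℚ)) ≠ 0 := by
      have := hα1 (ζ x); positivity
    rw [div_self h1, div_self h2]
    ring
  have hmin' : ∀ ψ, Phi G α ζ' ≤ Phi G α ψ := fun ψ => hPhiEq ▸ hgmin ψ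
  refine ⟨hmin', ?_⟩
  -- counting
  have hxcol : ζ' x = k₀ := Function.update_self _ _ _
  have hAx : {s : Finset V | IsLargeClique G α ζ s ∧ x ∈ s} = {C} := by
    ext s
    simp only [Set.mem_setOf_eq, Set.mem_singleton_iff]
    constructor
    · rintro ⟨hs, hxs⟩
      exact LC_unique hα1 hsum hdeg hgmin hs hC hxs hx
    · rintro rfl
      exact ⟨hC, hx⟩
  have hnox : {s : Finset V | IsLargeClique G α ζ' s ∧ x ∉ s}
      = {s : Finset V | IsLargeClique G α ζ s ∧ x ∉ s} := by
    ext s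
    simp only [Set.mem_setOf_eq]
    constructor
    · rintro ⟨hs, hxs⟩
      refine ⟨isLargeClique_congr (fun v hv => ?_) hs, hxs⟩
      exact Function.update_of_ne (fun h => hxs (by rw [← h]; exact hv)) _ _
    · rintro ⟨hs, hxs⟩
      refine ⟨isLargeClique_congr (fun v hv => ?_) hs, hxs⟩
      exact (Function.update_of_ne (fun h => hxs (by rw [← h]; exact hv)) _ _).symm
  have hBsub : {s : Finset V | IsLargeClique G α ζ' s ∧ x ∈ s}
      ⊆ {insert x (colNbr G ζ x k₀)} := by
    rintro s ⟨hs, hxs⟩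
    have := LC_eq_fan hα1 hsum hdeg hmin' hs hxs
    rw [hxcol] at this
    rw [hζ', colNbr_update_self] at this
    exact this
  have hBle : ({s : Finset V | IsLargeClique G α ζ' s ∧ x ∈ s}).ncard ≤ 1 := by
    have := Set.ncard_le_ncard hBsub (Set.finite_singleton _)
    rwa [Set.ncard_singleton] at this
  have hge : numLargeCliques G α ζ ≤ numLargeCliques G α ζ' := by
    rw [hgnum]
    exact hphimin ζ' hmin'
  rw [numLC_split ζ x, numLC_split ζ' x, hnox, hAx, Set.ncard_singleton] at hge
  have hBge : 1 ≤ ({s : Finset V | IsLargeClique G α ζ' s ∧ x ∈ s}).ncard := by omega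
  have hBne : ({s : Finset V | IsLargeClique G α ζ' s ∧ x ∈ s}).Nonempty := by
    rw [← Set.ncard_pos (Set.toFinite _)] at *
    omega
  obtain ⟨s, hs⟩ := hBne
  have hseq : s = insert x (colNbr G ζ x k₀) := hBsub hs
  constructor
  · have hBeq : ({s : Finset V | IsLargeClique G α ζ' s ∧ x ∈ s}).ncard = 1 :=
      le_antisymm hBle hBge
    have heq2 : numLargeCliques G α ζ' = numLargeCliques G α ζ := by
      rw [numLC_split ζ' x, numLC_split (G := G) (α := α) ζ x, hnox, hAx,
        Set.ncard_singleton, hBeq]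
    rw [heq2, hgnum]
  · rw [← hseq]
    exact hs.1
end Cliques

/-- membership in the set `Ω`: `ζ` minimizes `Φ` and has the same (minimal) number of
large cliques as the reference coloring `ξ`. -/
def IsOmega {V : Type*} [Fintype V] [DecidableEq V] (G : SimpleGraph V) [DecidableRel G.Adj]
    {k : ℕ} (α : Fin k → ℕ) (ξ ζ : V → Fin k) : Prop :=
  (∀ ψ, Phi G α ζ ≤ Phi G α ψ) ∧ numLargeCliques G α ζ = numLargeCliques G α ξ

section Main
variable {V : Type*} [Fintype V] [DecidableEq V] {G : SimpleGraph V} [DecidableRel G.Adj]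
variable {k D : ℕ} {α : Fin k → ℕ} {ξ : V → Fin k}

variable (hα1 : ∀ m, 1 ≤ α m) (hsum : ∑ m, α m = D) (hdeg : ∀ v, G.degree v ≤ D)
variable (hphimin : ∀ ψ, (∀ χ, Phi G α ψ ≤ Phi G α χ) →
      numLargeCliques G α ξ ≤ numLargeCliques G α ψ)

include hα1 hsum hdeg hphimin

lemma flip_good' {ζ : V → Fin k} (hΩ : IsOmega G α ξ ζ) {C : Finset V}
    (hC : IsLargeClique G α ζ C) {x : V} (hx : x ∈ C) {k₀ : Fin k} (hk : k₀ ≠ ζ x) :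
    IsOmega G α ξ (Function.update ζ x k₀)
    ∧ IsLargeClique G α (Function.update ζ x k₀) (insert x (colNbr G ζ x k₀)) := by
  obtain ⟨h1, h2, h3⟩ := flip_good hα1 hsum hdeg hphimin hΩ.1 hΩ.2 hC hx hk
  exact ⟨⟨h1, h2⟩, h3⟩

omit hphimin in
lemma profile' {ζ : V → Fin k} (hΩmin : ∀ ψ, Phi G α ζ ≤ Phi G α ψ) {C : Finset V}
    (hC : IsLargeClique G α ζ C) {x : V} (hx : x ∈ C) :
    colNbr G ζ x (ζ x) = C.erase x ∧ (∀ k₀, cdeg G ζ x k₀ = α k₀) := by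
  obtain ⟨hCc, hmono⟩ := LC_color hC hx
  have prof := clique_profile hα1 hsum hdeg hΩmin hCc hmono hx
  exact ⟨prof.2.1, prof.2.2⟩

/-- **Dichotomy.** If `y` is in the `b`-fan of a vertex `x` of a large clique `C` and `y` is
adjacent to some vertex of `C` other than `x`, then `y` is adjacent to all of `C`. -/
lemma dichotomy {ζ : V → Fin k} (hΩ : IsOmega G α ξ ζ) {C : Finset V}
    (hC : IsLargeClique G α ζ C) {x : V} (hx : x ∈ C) {b : Fin k} (hb : b ≠ ζ x)
    {y : V} (hy : y ∈ colNbr G ζ x b) {z : V} (hz : z ∈ C) (hzx : z ≠ x)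
    (hadj : G.Adj z y) : ∀ z' ∈ C, G.Adj y z' := by
  classical
  obtain ⟨hΩ', hLC'⟩ := flip_good' hα1 hsum hdeg hphimin hΩ hC hx hb
  set ζ' := Function.update ζ x b with hζ'
  set C' := insert x (colNbr G ζ x b) with hC'def
  have hyC' : y ∈ C' := Finset.mem_insert_of_mem hy
  have hyx : y ≠ x := fun h => not_self_mem_colNbr (h ▸ hy)
  have hζ'y : ζ' y = b := by
    rw [hζ', Function.update_of_ne hyx]
    exact (mem_colNbr.1 hy).2
  -- the color of C
  obtain ⟨hCc, hmono⟩ := LC_color hC hx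
  set m := ζ x with hm
  have hmne : m ≠ b := fun h => hb h.symm
  -- second flip at y towards m
  have hmb : m ≠ ζ' y := by rw [hζ'y]; exact hmne
  obtain ⟨hΩ'', hLC''⟩ := flip_good' hα1 hsum hdeg hphimin hΩ' hLC' hyC' hmb
  set Y := colNbr G ζ' y m with hYdef
  -- z ∈ Y
  have hzy : z ∈ Y := by
    rw [hYdef, mem_colNbr]
    refine ⟨hadj.symm, ?_⟩
    rw [hζ', Function.update_of_ne hzx]
    exact hmono z hz
  -- profile of y in ζ' gives |Y| = α m
  have hprofy := profile' hα1 hsum hdeg hΩ'.1 hLC' hyC'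
  have hYcard : Y.card = α m := hprofy.2 m
  -- profile of z in ζ gives colNbr ζ z m = C.erase z
  have hzmem : ζ z = m := hmono z hz
  have hprofz : colNbr G ζ z m = C.erase z := by
    have := profile' hα1 hsum hdeg hΩ.1 hC hz
    rw [hzmem] at this
    exact this.1
  -- Y ⊆ C.erase x
  have hclique : G.IsNClique (α m + 1) (insert y Y) := by
    obtain ⟨mm, hcc, hmm⟩ := hLC''
    have : mm = m := by
      have h1 : Function.update ζ' y m y = m := Function.update_self _ _ _
      have h2 := hmm y (Finset.mem_insert_self _ _)
      rw [h1] at h2; exact h2.symm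
    rwa [this] at hcc
  have hYsub : Y ⊆ C.erase x := by
    intro y' hy'
    by_cases hy'z : y' = z
    · subst hy'z
      exact Finset.mem_erase.2 ⟨hzx, hz⟩
    · -- y' adjacent to z via the clique insert y Y
      have hy'adjz : G.Adj y' z := by
        apply hclique.1 (by exact_mod_cast Finset.mem_insert_of_mem hy')
          (by exact_mod_cast Finset.mem_insert_of_mem hzy) hy'z
      -- y' has ζ'-color m, y' ≠ x
      have hy'col : ζ' y' = m := (mem_colNbr.1 hy').2
      have hy'x : y' ≠ x := by
        intro h
        rw [h, hζ', Function.update_self] at hy'col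
        exact hmne hy'col.symm
      have : y' ∈ colNbr G ζ z m := by
        rw [mem_colNbr]
        constructor
        · exact hy'adjz.symm
        · rw [hζ', Function.update_of_ne hy'x] at hy'col
          exact hy'col
      rw [hprofz] at this
      exact Finset.mem_erase.2 ⟨hy'x, (Finset.mem_erase.1 this).2⟩
  -- equality by cards
  have hCcard : (C.erase x).card = α m := by
    rw [Finset.card_erase_of_mem hx, hCc.2]
    omega
  have hYeq : Y = C.erase x :=
    Finset.eq_of_subset_of_card_le hYsub (by rw [hYcard, hCcard])
  intro z' hz'
  by_cases hz'x : z' = x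
  · subst hz'x
    exact ((mem_colNbr.1 hy).1).symm
  · have : z' ∈ Y := by rw [hYeq]; exact Finset.mem_erase.2 ⟨hz'x, hz'⟩
    exact (mem_colNbr.1 this).1

end Main

section Walk
variable {V : Type*} [Fintype V] [DecidableEq V] (G : SimpleGraph V) [DecidableRel G.Adj]
variable {k : ℕ}

/-- state of the walk: current coloring and current pivot -/
noncomputable def wS (ξ : V → Fin k) (i j : Fin k) (v₀ : V) : ℕ → (V → Fin k) × V
  | 0 => (ξ, v₀)
  | n+1 =>
      let st := wS ξ i j v₀ n
      let oc : Fin k := if n % 2 = 0 then j else i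
      (Function.update st.1 st.2 oc,
        if h : (colNbr G st.1 st.2 oc).Nonempty then h.choose else v₀)

noncomputable def wζ (ξ : V → Fin k) (i j : Fin k) (v₀ : V) (n : ℕ) : V → Fin k :=
  (wS G ξ i j v₀ n).1

noncomputable def wp (ξ : V → Fin k) (i j : Fin k) (v₀ : V) (n : ℕ) : V :=
  (wS G ξ i j v₀ n).2

def wcol (i j : Fin k) (n : ℕ) : Fin k := if n % 2 = 0 then i else j

def wocol (i j : Fin k) (n : ℕ) : Fin k := if n % 2 = 0 then j else i

noncomputable def wFan (ξ : V → Fin k) (i j : Fin k) (v₀ : V) (n : ℕ) : Finset V :=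
  colNbr G (wζ G ξ i j v₀ n) (wp G ξ i j v₀ n) (wocol i j n)

noncomputable def wK (ξ : V → Fin k) (i j : Fin k) (v₀ : V) (C₁ : Finset V) : ℕ → Finset V
  | 0 => C₁
  | n+1 => insert (wp G ξ i j v₀ n) (wFan G ξ i j v₀ n)

variable {G}

lemma wζ_zero (ξ : V → Fin k) (i j : Fin k) (v₀ : V) : wζ G ξ i j v₀ 0 = ξ := rfl

lemma wp_zero (ξ : V → Fin k) (i j : Fin k) (v₀ : V) : wp G ξ i j v₀ 0 = v₀ := rfl

lemma wζ_succ (ξ : V → Fin k) (i j : Fin k) (v₀ : V) (n : ℕ) :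
    wζ G ξ i j v₀ (n+1)
      = Function.update (wζ G ξ i j v₀ n) (wp G ξ i j v₀ n) (wocol i j n) := by
  show (wS G ξ i j v₀ (n+1)).1 = _
  rw [wS]
  rfl

lemma wp_succ (ξ : V → Fin k) (i j : Fin k) (v₀ : V) (n : ℕ) :
    wp G ξ i j v₀ (n+1)
      = if h : (wFan G ξ i j v₀ n).Nonempty then h.choose else v₀ := by
  show (wS G ξ i j v₀ (n+1)).2 = _
  rw [wS]
  rfl

lemma wp_succ_mem (ξ : V → Fin k) (i j : Fin k) (v₀ : V) (n : ℕ)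
    (h : (wFan G ξ i j v₀ n).Nonempty) : wp G ξ i j v₀ (n+1) ∈ wFan G ξ i j v₀ n := by
  rw [wp_succ, dif_pos h]
  exact h.choose_spec

lemma wcol_succ (i j : Fin k) (n : ℕ) : wcol i j (n+1) = wocol i j n := by
  rcases Nat.even_or_odd n with h | h
  · have h2 : n % 2 = 0 := Nat.even_iff.1 h
    have h3 : (n+1) % 2 = 1 := by omega
    simp [wcol, wocol, h2, h3]
  · have h2 : n % 2 = 1 := Nat.odd_iff.1 h
    have h3 : (n+1) % 2 = 0 := by omega
    simp [wcol, wocol, h2, h3]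

lemma wocol_succ (i j : Fin k) (n : ℕ) : wocol i j (n+1) = wcol i j n := by
  rcases Nat.even_or_odd n with h | h
  · have h2 : n % 2 = 0 := Nat.even_iff.1 h
    have h3 : (n+1) % 2 = 1 := by omega
    simp [wcol, wocol, h2, h3]
  · have h2 : n % 2 = 1 := Nat.odd_iff.1 h
    have h3 : (n+1) % 2 = 0 := by omega
    simp [wcol, wocol, h2, h3]

lemma wocol_ne_wcol {i j : Fin k} (hij : j ≠ i) (n : ℕ) : wocol i j n ≠ wcol i j n := by
  rcases Nat.even_or_odd n with h | h
  · have h2 : n % 2 = 0 := Nat.even_iff.1 h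
    simp [wcol, wocol, h2, hij]
  · have h2 : n % 2 = 1 := Nat.odd_iff.1 h
    simp [wcol, wocol, h2]
    exact fun hh => hij hh.symm

lemma wcol_mem {i j : Fin k} (n : ℕ) : wcol i j n = i ∧ wocol i j n = j
    ∨ wcol i j n = j ∧ wocol i j n = i := by
  rcases Nat.even_or_odd n with h | h
  · left; have h2 : n % 2 = 0 := Nat.even_iff.1 h; simp [wcol, wocol, h2]
  · right; have h2 : n % 2 = 1 := Nat.odd_iff.1 h; simp [wcol, wocol, h2]

/-- The full invariant of the walk. -/
structure WInv [Fintype V] (G : SimpleGraph V) [DecidableRel G.Adj] (α : Fin k → ℕ)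
    (ξ : V → Fin k) (i j : Fin k) (v₀ : V) (C₁ : Finset V) (n : ℕ) : Prop where
  omg : IsOmega G α ξ (wζ G ξ i j v₀ n)
  cliq : G.IsNClique (α (wcol i j n) + 1) (wK G ξ i j v₀ C₁ n)
  mono : ∀ v ∈ wK G ξ i j v₀ C₁ n, wζ G ξ i j v₀ n v = wcol i j n
  pmem : wp G ξ i j v₀ n ∈ wK G ξ i j v₀ C₁ n
  pcol : ξ (wp G ξ i j v₀ n) = wcol i j n
  unflip : ∀ x, (∀ l, l < n → x ≠ wp G ξ i j v₀ l) → wζ G ξ i j v₀ n x = ξ x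
  flip : ∀ l, l < n → wζ G ξ i j v₀ n (wp G ξ i j v₀ l) = wocol i j l
  fresh : ∀ y ∈ wFan G ξ i j v₀ n, ξ y = wocol i j n
  noadjP : ∀ l, l < n → ∀ y ∈ wFan G ξ i j v₀ n, ¬ G.Adj (wp G ξ i j v₀ l) y
  priv : ∀ z ∈ wK G ξ i j v₀ C₁ n, z ≠ wp G ξ i j v₀ n →
    ∀ y ∈ wFan G ξ i j v₀ n, ¬ G.Adj z y
  privC : ∀ z ∈ C₁, z ≠ v₀ → ∀ y ∈ wFan G ξ i j v₀ n, ¬ G.Adj z y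
  cert : ∀ y ∈ wFan G ξ i j v₀ n, ∃ T : Finset V,
    colNbr G ξ y (wcol i j n) = insert (wp G ξ i j v₀ n) T ∧ wp G ξ i j v₀ n ∉ T ∧
    T.card = α (wcol i j n) ∧ (T : Set V).Pairwise G.Adj
  sideO : ∀ l, l < n → colNbr G (wζ G ξ i j v₀ n) (wp G ξ i j v₀ l) (wocol i j l)
    ⊆ wFan G ξ i j v₀ l
  sideC : ∀ l, l < n → colNbr G (wζ G ξ i j v₀ n) (wp G ξ i j v₀ l) (wcol i j l)
    ⊆ insert (wp G ξ i j v₀ (l+1)) ((wK G ξ i j v₀ C₁ l).erase (wp G ξ i j v₀ l))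

end Walk

section Helpers
variable {V : Type*} [Fintype V] [DecidableEq V] {G : SimpleGraph V} [DecidableRel G.Adj]
variable {k D : ℕ} {α : Fin k → ℕ} {ξ : V → Fin k}

lemma mem_colNbr_update_ne {ζ : V → Fin k} {x z : V} {k₀ c : Fin k} {y : V} (hyx : y ≠ x) :
    y ∈ colNbr G (Function.update ζ x k₀) z c ↔ y ∈ colNbr G ζ z c := by
  rw [mem_colNbr, mem_colNbr, Function.update_of_ne hyx]

lemma colNbr_update_subset (ζ : V → Fin k) (x z : V) (k₀ c : Fin k) :
    colNbr G (Function.update ζ x k₀) z c ⊆ insert x (colNbr G ζ z c) := by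
  intro y hy
  by_cases hyx : y = x
  · subst hyx; exact Finset.mem_insert_self _ _
  · exact Finset.mem_insert_of_mem ((mem_colNbr_update_ne hyx).1 hy)

variable (hα1 : ∀ m, 1 ≤ α m) (hsum : ∑ m, α m = D) (hdeg : ∀ v, G.degree v ≤ D)
variable (hphimin : ∀ ψ, (∀ χ, Phi G α ψ ≤ Phi G α χ) →
      numLargeCliques G α ξ ≤ numLargeCliques G α ψ)

include hα1 hsum hdeg hphimin in
/-- the certificate: a fan member `y` of a pivot `x` has an exactly determined `m`-side:
`x` together with an `α m`-clique. -/
lemma cert_abs {ζ : V → Fin k} (hΩ : IsOmega G α ξ ζ) {C : Finset V}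
    (hC : IsLargeClique G α ζ C) {x : V} (hx : x ∈ C) {b : Fin k} (hb : b ≠ ζ x)
    {y : V} (hy : y ∈ colNbr G ζ x b) :
    ∃ T : Finset V, colNbr G ζ y (ζ x) = insert x T ∧ x ∉ T ∧ T.card = α (ζ x) ∧
      (T : Set V).Pairwise G.Adj := by
  classical
  obtain ⟨hΩ', hLC'⟩ := flip_good' hα1 hsum hdeg hphimin hΩ hC hx hb
  set ζ' := Function.update ζ x b with hζ'
  have hyx : y ≠ x := fun h => not_self_mem_colNbr (h ▸ hy)
  have hyC' : y ∈ insert x (colNbr G ζ x b) := Finset.mem_insert_of_mem hy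
  have hζ'y : ζ' y = b := by rw [hζ', Function.update_of_ne hyx]; exact (mem_colNbr.1 hy).2
  have hmb : ζ x ≠ ζ' y := by rw [hζ'y]; exact fun h => hb h.symm
  obtain ⟨hΩ'', hLC''⟩ := flip_good' hα1 hsum hdeg hphimin hΩ' hLC' hyC' hmb
  set T := colNbr G ζ' y (ζ x) with hT
  have hprofy := profile' hα1 hsum hdeg hΩ'.1 hLC' hyC'
  have hcard : T.card = α (ζ x) := hprofy.2 (ζ x)
  have hxT : x ∉ T := by
    rw [hT, mem_colNbr]
    rintro ⟨-, hcol⟩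
    rw [hζ', Function.update_self] at hcol
    exact hb hcol
  have hpair : (T : Set V).Pairwise G.Adj := by
    obtain ⟨mm, hcc, -⟩ := hLC''
    have := hcc.1
    intro a ha b' hb' hab
    exact this (Finset.mem_coe.2 (Finset.mem_insert_of_mem (by exact_mod_cast ha)))
      (Finset.mem_coe.2 (Finset.mem_insert_of_mem (by exact_mod_cast hb'))) hab
  refine ⟨T, ?_, hxT, hcard, hpair⟩
  ext w
  by_cases hwx : w = x
  · subst hwx
    simp only [Finset.mem_insert, true_or, iff_true]
    rw [mem_colNbr]
    exact ⟨((mem_colNbr.1 hy).1).symm, rfl⟩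
  · rw [Finset.mem_insert]
    rw [mem_colNbr]
    constructor
    · rintro ⟨hadj, hcol⟩
      right
      rw [hT, mem_colNbr]
      exact ⟨hadj, by rw [hζ', Function.update_of_ne hwx]; exact hcol⟩
    · rintro (h | h)
      · exact absurd h hwx
      · rw [hT, mem_colNbr] at h
        refine ⟨h.1, ?_⟩
        rw [hζ', Function.update_of_ne hwx] at h
        exact h.2
end Helpers

section WalkInv
variable {V : Type*} [Fintype V] [DecidableEq V] {G : SimpleGraph V} [DecidableRel G.Adj]
variable {k D : ℕ} {α : Fin k → ℕ} {ξ : V → Fin k} {i j : Fin k} {v₀ : V} {C₁ : Finset V}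

local notation "Zζ" => wζ G ξ i j v₀
local notation "Pp" => wp G ξ i j v₀
local notation "Ff" => wFan G ξ i j v₀
local notation "Kk" => wK G ξ i j v₀ C₁
local notation "co" => wcol i j
local notation "oc" => wocol i j

variable (hα1 : ∀ m, 1 ≤ α m) (hsum : ∑ m, α m = D) (hdeg : ∀ v, G.degree v ≤ D)
variable (hphimin : ∀ ψ, (∀ χ, Phi G α ψ ≤ Phi G α χ) →
      numLargeCliques G α ξ ≤ numLargeCliques G α ψ)
variable (hmin : ∀ ψ, Phi G α ξ ≤ Phi G α ψ)
variable (hij : j ≠ i) (hv₀ : v₀ ∈ C₁) (hC₁ : G.IsNClique (α i + 1) C₁)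
variable (hC₁col : ∀ v ∈ C₁, ξ v = i)

lemma winv_LC {n : ℕ} (w : WInv G α ξ i j v₀ C₁ n) :
    IsLargeClique G α (Zζ n) (Kk n) := ⟨co n, w.cliq, w.mono⟩

lemma winv_pZ {n : ℕ} (w : WInv G α ξ i j v₀ C₁ n) : (Zζ n) (Pp n) = co n :=
  w.mono _ w.pmem

include hα1 hsum hdeg in
lemma winv_fanCard {n : ℕ} (w : WInv G α ξ i j v₀ C₁ n) : (Ff n).card = α (oc n) :=
  (profile' hα1 hsum hdeg w.omg.1 (winv_LC w) w.pmem).2 (oc n)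

include hα1 hsum hdeg in
lemma winv_fanNonempty {n : ℕ} (w : WInv G α ξ i j v₀ C₁ n) : (Ff n).Nonempty := by
  rw [← Finset.card_pos, winv_fanCard hα1 hsum hdeg w]
  exact hα1 _

include hα1 hsum hdeg in
lemma winv_pmem_succ {n : ℕ} (w : WInv G α ξ i j v₀ C₁ n) : Pp (n+1) ∈ Ff n :=
  wp_succ_mem _ _ _ _ _ (winv_fanNonempty hα1 hsum hdeg w)

include hij in
lemma winv_pivot_ne {n l : ℕ} (wn : WInv G α ξ i j v₀ C₁ n) (wl : WInv G α ξ i j v₀ C₁ l)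
    (h : l < n) : Pp n ≠ Pp l := by
  intro hEq
  have h1 : (Zζ n) (Pp l) = oc l := wn.flip l h
  have h2 : (Zζ n) (Pp n) = co n := winv_pZ wn
  have h3 : co n = oc l := by rw [← h2, hEq, h1]
  have h4 : co n = co l := by rw [← wn.pcol, hEq, wl.pcol]
  exact wocol_ne_wcol hij l (h4 ▸ h3).symm

include hα1 hsum hdeg in
/-- profile of the pivot: its own-color side in `Zζ n` is exactly the rest of the clique -/
lemma winv_pside {n : ℕ} (w : WInv G α ξ i j v₀ C₁ n) :
    colNbr G (Zζ n) (Pp n) (co n) = (Kk n).erase (Pp n) := by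
  have := profile' hα1 hsum hdeg w.omg.1 (winv_LC w) w.pmem
  rw [winv_pZ w] at this
  exact this.1

variable (hB2 : ∀ z ∈ C₁, z ≠ v₀ → ∀ y ∈ colNbr G ξ v₀ j, ¬ G.Adj z y)
variable (hphimin' : ∀ ψ, (∀ χ, Phi G α ψ ≤ Phi G α χ) →
      numLargeCliques G α ξ ≤ numLargeCliques G α ψ)

include hα1 hsum hdeg hphimin hmin hij hv₀ hC₁ hC₁col hB2 in
lemma winv_zero : WInv G α ξ i j v₀ C₁ 0 := by
  have hco0 : co 0 = i := rfl
  have hoc0 : oc 0 = j := rfl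
  have hΩ0 : IsOmega G α ξ ξ := ⟨hmin, rfl⟩
  have hLC : IsLargeClique G α ξ C₁ := ⟨i, hC₁, hC₁col⟩
  refine ⟨?_, ?_, ?_, ?_, ?_, ?_, ?_, ?_, ?_, ?_, ?_, ?_, ?_, ?_⟩
  · exact hΩ0
  · rw [hco0]; exact hC₁
  · intro v hv; rw [hco0]; exact hC₁col v hv
  · exact hv₀
  · rw [hco0]; exact hC₁col v₀ hv₀
  · intro x _; rfl
  · intro l hl; omega
  · intro y hy
    rw [hoc0]
    exact (mem_colNbr.1 hy).2
  · intro l hl; omega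
  · exact hB2
  · exact hB2
  · intro y hy
    have hbi : (j : Fin k) ≠ ξ v₀ := by rw [hC₁col v₀ hv₀]; exact hij
    obtain ⟨T, hT1, hT2, hT3, hT4⟩ := cert_abs hα1 hsum hdeg hphimin hΩ0 hLC hv₀ hbi hy
    refine ⟨T, ?_, ?_, ?_, hT4⟩
    · show colNbr G ξ y (co 0) = insert v₀ T
      rw [← hT1, hC₁col v₀ hv₀, hco0]
    · show v₀ ∉ T
      exact hT2
    · rw [hT3, hC₁col v₀ hv₀, hco0]
  · intro l hl; omega
  · intro l hl; omega

end WalkInv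

section WalkStep
variable {V : Type*} [Fintype V] [DecidableEq V] {G : SimpleGraph V} [DecidableRel G.Adj]
variable {k D : ℕ} {α : Fin k → ℕ} {ξ : V → Fin k} {i j : Fin k} {v₀ : V} {C₁ : Finset V}

local notation "Zζ" => wζ G ξ i j v₀
local notation "Pp" => wp G ξ i j v₀
local notation "Ff" => wFan G ξ i j v₀
local notation "Kk" => wK G ξ i j v₀ C₁
local notation "co" => wcol i j
local notation "oc" => wocol i j

variable (hα1 : ∀ m, 1 ≤ α m) (hα2 : ∀ m, 2 ≤ α m)
variable (hsum : ∑ m, α m = D) (hdeg : ∀ v, G.degree v ≤ D)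
variable (hphimin : ∀ ψ, (∀ χ, Phi G α ψ ≤ Phi G α χ) →
      numLargeCliques G α ξ ≤ numLargeCliques G α ψ)
variable (hmin : ∀ ψ, Phi G α ξ ≤ Phi G α ψ)
variable (hij : j ≠ i) (hv₀ : v₀ ∈ C₁) (hC₁ : G.IsNClique (α i + 1) C₁)
variable (hC₁col : ∀ v ∈ C₁, ξ v = i)

include hα1 hα2 hsum hdeg hphimin hmin hij hv₀ hC₁ hC₁col in
lemma winv_step {n : ℕ} (ih : ∀ m, m ≤ n → WInv G α ξ i j v₀ C₁ m) :
    WInv G α ξ i j v₀ C₁ (n+1) := by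
  classical
  have wn := ih n le_rfl
  have hZsucc : Zζ (n+1) = Function.update (Zζ n) (Pp n) (oc n) := wζ_succ _ _ _ _ _
  have hKdef : Kk (n+1) = insert (Pp n) (Ff n) := rfl
  have hocn : oc n ≠ (Zζ n) (Pp n) := by
    rw [winv_pZ wn]; exact wocol_ne_wcol hij n
  obtain ⟨hΩN0, hLCN0⟩ := flip_good' hα1 hsum hdeg hphimin wn.omg (winv_LC wn) wn.pmem hocn
  have hΩN : IsOmega G α ξ (Zζ (n+1)) := by rw [hZsucc]; exact hΩN0
  have hLCN : IsLargeClique G α (Zζ (n+1)) (Kk (n+1)) := by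
    rw [hZsucc, hKdef]; exact hLCN0
  have hZNpn : (Zζ (n+1)) (Pp n) = oc n := by
    rw [hZsucc]; exact Function.update_self _ _ _
  -- color of the new clique
  obtain ⟨mm, hmmc, hmmmono⟩ := hLCN
  have hmmeq : mm = co (n+1) := by
    have h1 := hmmmono (Pp n) (by rw [hKdef]; exact Finset.mem_insert_self _ _)
    rw [hZNpn] at h1
    rw [wcol_succ]
    exact h1.symm
  have hcliqN : G.IsNClique (α (co (n+1)) + 1) (Kk (n+1)) := hmmeq ▸ hmmc
  have hmonoN : ∀ v ∈ Kk (n+1), Zζ (n+1) v = co (n+1) := fun v hv => hmmeq ▸ hmmmono v hv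
  have hLCN' : IsLargeClique G α (Zζ (n+1)) (Kk (n+1)) := ⟨co (n+1), hcliqN, hmonoN⟩
  -- pivot distinctness at level n
  have hpne : ∀ l, l < n → Pp n ≠ Pp l := fun l hl =>
    winv_pivot_ne hij wn (ih l (le_of_lt hl)) hl
  -- flipped colors at level n+1
  have hflipN : ∀ l, l < n+1 → (Zζ (n+1)) (Pp l) = oc l := by
    intro l hl
    rcases Nat.lt_succ_iff_lt_or_eq.1 hl with hl' | rfl
    · rw [hZsucc, Function.update_of_ne (fun h => hpne l hl' h.symm)]
      exact wn.flip l hl'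
    · exact hZNpn
  -- unflipped vertices at level n+1
  have hunflipN : ∀ x, (∀ l, l < n+1 → x ≠ Pp l) → (Zζ (n+1)) x = ξ x := by
    intro x hx
    rw [hZsucc, Function.update_of_ne (hx n (by omega))]
    exact wn.unflip x (fun l hl => hx l (by omega))
  -- the new pivot
  have hfne := winv_fanNonempty hα1 hsum hdeg wn
  have hpmemF : Pp (n+1) ∈ Ff n := wp_succ_mem _ _ _ _ _ hfne
  have hpmemN : Pp (n+1) ∈ Kk (n+1) := by
    rw [hKdef]; exact Finset.mem_insert_of_mem hpmemF
  have hpcolN : ξ (Pp (n+1)) = co (n+1) := by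
    rw [wcol_succ]; exact wn.fresh _ hpmemF
  have hZNpN : Zζ (n+1) (Pp (n+1)) = co (n+1) := hmonoN _ hpmemN
  -- side formulas for old pivots
  have hsideON : ∀ l, l < n+1 → colNbr G (Zζ (n+1)) (Pp l) (oc l) ⊆ Ff l := by
    intro l hl
    rcases Nat.lt_succ_iff_lt_or_eq.1 hl with hl' | rfl
    · intro y hy
      rw [hZsucc] at hy
      by_cases hyp : y = Pp n
      · exfalso
        subst hyp
        rw [mem_colNbr] at hy
        have hcol : oc n = oc l := by
          have h2 := hy.2
          rwa [Function.update_self] at h2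
        obtain ⟨m, rfl⟩ : ∃ m, n = m + 1 := ⟨n - 1, by omega⟩
        have hPF : Pp (m+1) ∈ Ff m := winv_pmem_succ hα1 hsum hdeg (ih m (by omega))
        rcases Nat.lt_succ_iff_lt_or_eq.1 hl' with hlm | rfl
        · exact (ih m (by omega)).noadjP l hlm _ hPF hy.1
        · rw [wocol_succ] at hcol
          exact wocol_ne_wcol hij l hcol.symm
      · exact wn.sideO l hl' ((mem_colNbr_update_ne hyp).1 hy)
    · intro y hy
      rw [hZsucc, colNbr_update_self] at hy
      exact hy
  have hsideCN : ∀ l, l < n+1 → colNbr G (Zζ (n+1)) (Pp l) (co l)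
      ⊆ insert (Pp (l+1)) ((Kk l).erase (Pp l)) := by
    intro l hl
    rcases Nat.lt_succ_iff_lt_or_eq.1 hl with hl' | rfl
    · intro y hy
      rw [hZsucc] at hy
      by_cases hyp : y = Pp n
      · -- y is the freshly flipped pivot `Pp n`
        subst hyp
        rw [mem_colNbr] at hy
        have hcol : oc n = co l := by
          have h2 := hy.2
          rwa [Function.update_self] at h2
        obtain ⟨m, rfl⟩ : ∃ m, n = m + 1 := ⟨n - 1, by omega⟩
        have hPF : Pp (m+1) ∈ Ff m := winv_pmem_succ hα1 hsum hdeg (ih m (by omega))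
        rcases Nat.lt_succ_iff_lt_or_eq.1 hl' with hlm | rfl
        · exact absurd hy.1 ((ih m (by omega)).noadjP l hlm _ hPF)
        · exact Finset.mem_insert_self _ _
      · exact wn.sideC l hl' ((mem_colNbr_update_ne hyp).1 hy)
    · intro y hy
      rw [hZsucc, colNbr_update_self] at hy
      rw [winv_pside hα1 hsum hdeg wn] at hy
      exact Finset.mem_insert_of_mem hy
  -- privacy at level n+1 (via the dichotomy)
  have hprivN : ∀ z ∈ Kk (n+1), z ≠ Pp (n+1) → ∀ y ∈ Ff (n+1), ¬ G.Adj z y := by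
    intro z hz hzp y hy hadj
    have hbN : oc (n+1) ≠ Zζ (n+1) (Pp (n+1)) := by
      rw [hZNpN]; exact wocol_ne_wcol hij (n+1)
    have hall := dichotomy hα1 hsum hdeg hphimin hΩN hLCN' hpmemN hbN hy hz hzp hadj
    have hyPn : G.Adj y (Pp n) :=
      hall (Pp n) (by rw [hKdef]; exact Finset.mem_insert_self _ _)
    have hycol : Zζ (n+1) y = oc (n+1) := (mem_colNbr.1 hy).2
    have hyadjN : G.Adj (Pp (n+1)) y := (mem_colNbr.1 hy).1
    have hyne : y ≠ Pp n := by
      intro h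
      rw [h, hZNpn] at hycol
      rw [wocol_succ] at hycol
      exact wocol_ne_wcol hij n hycol
    have hymem : y ∈ colNbr G (Zζ n) (Pp n) (co n) := by
      rw [mem_colNbr]
      refine ⟨hyPn.symm, ?_⟩
      have h1 : Zζ (n+1) y = Zζ n y := by
        rw [hZsucc, Function.update_of_ne hyne]
      rw [← h1, hycol, wocol_succ]
    rw [winv_pside hα1 hsum hdeg wn] at hymem
    rcases Finset.mem_erase.1 hymem with ⟨hynp, hyK⟩
    exact wn.priv y hyK hynp (Pp (n+1)) hpmemF hyadjN.symm
  -- exact ξ-side of the new pivot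
  have hPsideN : colNbr G (Zζ (n+1)) (Pp (n+1)) (co (n+1)) = (Kk (n+1)).erase (Pp (n+1)) := by
    have h := profile' hα1 hsum hdeg hΩN.1 hLCN' hpmemN
    rw [hZNpN] at h
    exact h.1
  have hsidePN : colNbr G ξ (Pp (n+1)) (co (n+1)) = (Ff n).erase (Pp (n+1)) := by
    ext w
    rw [mem_colNbr, Finset.mem_erase]
    constructor
    · rintro ⟨hadj, hcol⟩
      by_cases hfl : ∃ l, l < n+1 ∧ w = Pp l
      · exfalso
        obtain ⟨l, hl, rfl⟩ := hfl
        have hpc := (ih l (Nat.lt_succ_iff.1 hl)).pcol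
        have hcoeq : co l = co (n+1) := by rw [← hpc, hcol]
        rcases Nat.lt_succ_iff_lt_or_eq.1 hl with hl' | rfl
        · exact wn.noadjP l hl' (Pp (n+1)) hpmemF hadj.symm
        · rw [wcol_succ] at hcoeq
          exact wocol_ne_wcol hij l hcoeq.symm
      · push_neg at hfl
        have hwu : Zζ (n+1) w = ξ w := hunflipN w hfl
        have hwmem : w ∈ colNbr G (Zζ (n+1)) (Pp (n+1)) (co (n+1)) :=
          mem_colNbr.2 ⟨hadj, by rw [hwu, hcol]⟩
        rw [hPsideN] at hwmem
        rcases Finset.mem_erase.1 hwmem with ⟨hwne, hwK⟩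
        rw [hKdef] at hwK
        rcases Finset.mem_insert.1 hwK with h | h
        · exact absurd h (hfl n (by omega))
        · exact ⟨hwne, h⟩
    · rintro ⟨hne, hw⟩
      constructor
      · exact hcliqN.1 (by exact_mod_cast hpmemN)
          (by rw [hKdef]; exact_mod_cast Finset.mem_insert_of_mem hw) (fun h => hne h.symm)
      · rw [wcol_succ]; exact wn.fresh w hw
  -- freshness of the new fan
  have hfreshN : ∀ y ∈ Ff (n+1), ξ y = oc (n+1) := by
    intro y hy
    have hycol : Zζ (n+1) y = oc (n+1) := (mem_colNbr.1 hy).2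
    have hyadj : G.Adj (Pp (n+1)) y := (mem_colNbr.1 hy).1
    have hnotp : ∀ l, l < n+1 → y ≠ Pp l := by
      intro l hl hEq
      rcases Nat.lt_succ_iff_lt_or_eq.1 hl with hl' | rfl
      · exact wn.noadjP l hl' (Pp (n+1)) hpmemF (hEq ▸ hyadj).symm
      · rw [hEq, hZNpn] at hycol
        rw [wocol_succ] at hycol
        exact wocol_ne_wcol hij l hycol
    rw [← hunflipN y hnotp]
    exact hycol
  -- the fan-fan pinning argument
  have hpin : ∀ l', l' ≤ n → ∀ y, y ∈ Ff l' → y ∈ Ff (n+1) → False := by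
    intro l' hl' y hyl hyN
    obtain ⟨T, hT1, hT2, hT3, hT4⟩ := (ih l' hl').cert y hyl
    have hc1 : ξ y = oc l' := (ih l' hl').fresh y hyl
    have hc2 : ξ y = oc (n+1) := hfreshN y hyN
    have hocEq : oc l' = oc (n+1) := by rw [← hc1, hc2]
    have hcoEq : co l' = co (n+1) := by
      rcases wcol_mem (i := i) (j := j) l' with ⟨h1, h2⟩ | ⟨h1, h2⟩ <;>
        rcases wcol_mem (i := i) (j := j) (n+1) with ⟨g1, g2⟩ | ⟨g1, g2⟩
      · rw [h1, g1]
      · rw [h2, g2] at hocEq; exact absurd hocEq hij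
      · rw [h2, g2] at hocEq; exact absurd hocEq hij.symm
      · rw [h1, g1]
    have hPmem : Pp (n+1) ∈ insert (Pp l') T := by
      rw [← hT1, mem_colNbr]
      exact ⟨(mem_colNbr.1 hyN).1.symm, by rw [hpcolN, hcoEq]⟩
    have hPnel : Pp (n+1) ≠ Pp l' := by
      intro hEq
      have h1 := hflipN l' (by omega)
      rw [← hEq, hZNpN] at h1
      rw [hocEq] at h1
      exact wocol_ne_wcol hij (n+1) h1.symm
    have hPT : Pp (n+1) ∈ T := by
      rcases Finset.mem_insert.1 hPmem with h | h
      · exact absurd h hPnel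
      · exact h
    have hTne : (T.erase (Pp (n+1))).Nonempty := by
      rw [← Finset.card_pos, Finset.card_erase_of_mem hPT, hT3]
      have := hα2 (co l')
      omega
    obtain ⟨t, ht⟩ := hTne
    have htT : t ∈ T := (Finset.mem_erase.1 ht).2
    have htne : t ≠ Pp (n+1) := (Finset.mem_erase.1 ht).1
    have htadj : G.Adj (Pp (n+1)) t :=
      hT4 (by exact_mod_cast hPT) (by exact_mod_cast htT) (fun h => htne h.symm)
    have htins : t ∈ insert (Pp l') T := Finset.mem_insert_of_mem htT
    rw [← hT1] at htins
    have htcol : ξ t = co (n+1) := by rw [← hcoEq]; exact (mem_colNbr.1 htins).2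
    have htF : t ∈ (Ff n).erase (Pp (n+1)) := by
      rw [← hsidePN, mem_colNbr]
      exact ⟨htadj, htcol⟩
    have htK : t ∈ Kk (n+1) := by
      rw [hKdef]; exact Finset.mem_insert_of_mem (Finset.mem_erase.1 htF).2
    have hadjyt : G.Adj y t := (mem_colNbr.1 htins).1
    exact hprivN t htK htne y hyN hadjyt.symm
  -- no old pivot is adjacent to the new fan
  have hnoadjPN : ∀ l, l < n+1 → ∀ y ∈ Ff (n+1), ¬ G.Adj (Pp l) y := by
    intro l hl y hy hadj
    have hycolN : Zζ (n+1) y = oc (n+1) := (mem_colNbr.1 hy).2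
    have hyadjN : G.Adj (Pp (n+1)) y := (mem_colNbr.1 hy).1
    have hcases : oc (n+1) = oc l ∨ oc (n+1) = co l := by
      rcases wcol_mem (i := i) (j := j) (n+1) with ⟨h1, h2⟩ | ⟨h1, h2⟩ <;>
        rcases wcol_mem (i := i) (j := j) l with ⟨g1, g2⟩ | ⟨g1, g2⟩ <;>
          simp [h1, h2, g1, g2]
    rcases hcases with hA | hB
    · have hmem : y ∈ colNbr G (Zζ (n+1)) (Pp l) (oc l) :=
        mem_colNbr.2 ⟨hadj, by rw [hycolN, hA]⟩
      exact hpin l (by omega) y (hsideON l hl hmem) hy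
    · have hmem : y ∈ colNbr G (Zζ (n+1)) (Pp l) (co l) :=
        mem_colNbr.2 ⟨hadj, by rw [hycolN, hB]⟩
      have := hsideCN l hl hmem
      rcases Finset.mem_insert.1 this with h | h
      · -- y = Pp (l+1)
        subst h
        rcases Nat.lt_succ_iff_lt_or_eq.1 (show l + 1 < n + 2 by omega) with hl1 | hl1
        · rcases Nat.lt_succ_iff_lt_or_eq.1 hl1 with hl2 | hl2
          · exact wn.noadjP (l+1) hl2 (Pp (n+1)) hpmemF hyadjN.symm
          · -- l+1 = n : y = Pp n
            rw [hl2] at hycolN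
            rw [hZNpn, wocol_succ] at hycolN
            exact wocol_ne_wcol hij n hycolN
        · -- l+1 = n+1 : y = Pp (n+1) ∈ Ff (n+1), impossible
          have : Pp (l+1) ∉ Ff (n+1) := by rw [hl1]; exact not_self_mem_colNbr
          exact this hy
      · rcases Finset.mem_erase.1 h with ⟨hyne, hyK⟩
        cases l with
        | zero =>
            have hynv : y ≠ v₀ := hyne
            exact wn.privC y hyK hynv (Pp (n+1)) hpmemF hyadjN.symm
        | succ m =>
            rcases Finset.mem_insert.1 hyK with h2 | h2
            · exact wn.noadjP m (by omega) (Pp (n+1)) hpmemF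
                (by rw [← h2]; exact hyadjN.symm)
            · exact hpin m (by omega) y h2 hy
  -- no vertex of C₁ other than v₀ is adjacent to the new fan
  have hΩ0 : IsOmega G α ξ ξ := ⟨hmin, rfl⟩
  have hLC0 : IsLargeClique G α ξ C₁ := ⟨i, hC₁, hC₁col⟩
  have hprivCN : ∀ z ∈ C₁, z ≠ v₀ → ∀ y ∈ Ff (n+1), ¬ G.Adj z y := by
    intro z hz hzv y hy hadj
    have hycol : ξ y = oc (n+1) := hfreshN y hy
    have hξz : ξ z = i := hC₁col z hz
    have hyadjN : G.Adj (Pp (n+1)) y := (mem_colNbr.1 hy).1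
    -- the new pivot is not in C₁ \ {v₀} — in fact we only need `Pp (n+1) ≠ z`
    have hPnz : Pp (n+1) ≠ z := by
      intro hEq
      have hFc : (Ff n).card = α (oc n) := winv_fanCard hα1 hsum hdeg wn
      have : ((Ff n).erase (Pp (n+1))).Nonempty := by
        rw [← Finset.card_pos, Finset.card_erase_of_mem hpmemF, hFc]
        have := hα2 (oc n)
        omega
      obtain ⟨w, hw⟩ := this
      have hwF : w ∈ Ff n := (Finset.mem_erase.1 hw).2
      have hwne : w ≠ Pp (n+1) := (Finset.mem_erase.1 hw).1
      have hadjw : G.Adj (Pp (n+1)) w := by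
        apply hcliqN.1 (by exact_mod_cast hpmemN)
          (by rw [hKdef]; exact_mod_cast Finset.mem_insert_of_mem hwF)
        exact fun h => hwne h.symm
      exact wn.privC z hz hzv w hwF (hEq ▸ hadjw)
    rcases wcol_mem (i := i) (j := j) (n+1) with ⟨hcoN, hocN⟩ | ⟨hcoN, hocN⟩
    · -- co (n+1) = i, oc (n+1) = j : `y` is j-colored, y ∈ fan of z
      have hyS : y ∈ colNbr G ξ z j := mem_colNbr.2 ⟨hadj, by rw [hycol, hocN]⟩
      have hbz : (j : Fin k) ≠ ξ z := by rw [hξz]; exact hij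
      obtain ⟨T, hT1, hT2, hT3, hT4⟩ :=
        cert_abs hα1 hsum hdeg hphimin hΩ0 hLC0 hz hbz hyS
      rw [hξz] at hT1 hT3
      have hPmem : Pp (n+1) ∈ insert z T := by
        rw [← hT1, mem_colNbr]
        exact ⟨hyadjN.symm, by rw [hpcolN, hcoN]⟩
      have hPT : Pp (n+1) ∈ T := by
        rcases Finset.mem_insert.1 hPmem with h | h
        · exact absurd h hPnz
        · exact h
      have hTne : (T.erase (Pp (n+1))).Nonempty := by
        rw [← Finset.card_pos, Finset.card_erase_of_mem hPT, hT3]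
        have := hα2 i
        omega
      obtain ⟨t, ht⟩ := hTne
      have htT : t ∈ T := (Finset.mem_erase.1 ht).2
      have htne : t ≠ Pp (n+1) := (Finset.mem_erase.1 ht).1
      have htadj : G.Adj (Pp (n+1)) t :=
        hT4 (by exact_mod_cast hPT) (by exact_mod_cast htT) (fun h => htne h.symm)
      have htins : t ∈ insert z T := Finset.mem_insert_of_mem htT
      rw [← hT1] at htins
      have htcol : ξ t = co (n+1) := by rw [hcoN]; exact (mem_colNbr.1 htins).2
      have htF : t ∈ (Ff n).erase (Pp (n+1)) := by
        rw [← hsidePN, mem_colNbr]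
        exact ⟨htadj, htcol⟩
      have htK : t ∈ Kk (n+1) := by
        rw [hKdef]; exact Finset.mem_insert_of_mem (Finset.mem_erase.1 htF).2
      exact hprivN t htK htne y hy ((mem_colNbr.1 htins).1).symm
    · -- co (n+1) = j, oc (n+1) = i : `y` is i-colored, hence a vertex of C₁
      have hyC : y ∈ colNbr G ξ z i := mem_colNbr.2 ⟨hadj, by rw [hycol, hocN]⟩
      have hzC : colNbr G ξ z i = C₁.erase z := by
        have := (profile' hα1 hsum hdeg hmin hLC0 hz).1
        rwa [hξz] at this
      rw [hzC] at hyC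
      rcases Finset.mem_erase.1 hyC with ⟨hyz, hyC₁⟩
      have hynv : y ≠ v₀ := by
        intro hEq
        have h1 := hflipN 0 (by omega)
        have hp0 : Pp 0 = v₀ := rfl
        rw [hp0] at h1
        have h2 : Zζ (n+1) y = oc (n+1) := (mem_colNbr.1 hy).2
        rw [hEq, h1] at h2
        have hoc0 : (oc 0 : Fin k) = j := rfl
        rw [hoc0, hocN] at h2
        exact hij h2
      -- the j-fan of y (a vertex of C₁)
      have hbJ : (j : Fin k) ≠ ξ y := by rw [hC₁col y hyC₁]; exact hij
      obtain ⟨hΩy, hLCy⟩ := flip_good' hα1 hsum hdeg hphimin hΩ0 hLC0 hyC₁ hbJ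
      have hSpair : ((colNbr G ξ y j : Finset V) : Set V).Pairwise G.Adj := by
        obtain ⟨mm2, hcc2, -⟩ := hLCy
        intro a ha b' hb' hab
        exact hcc2.1 (Finset.mem_coe.2 (Finset.mem_insert_of_mem (by exact_mod_cast ha)))
          (Finset.mem_coe.2 (Finset.mem_insert_of_mem (by exact_mod_cast hb'))) hab
      have hScard : (colNbr G ξ y j).card = α j := by
        have := (profile' hα1 hsum hdeg hmin hLC0 hyC₁).2 j
        exact this
      have hPS : Pp (n+1) ∈ colNbr G ξ y j := by
        rw [mem_colNbr]
        exact ⟨hyadjN.symm, by rw [hpcolN, hcoN]⟩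
      have hSne : ((colNbr G ξ y j).erase (Pp (n+1))).Nonempty := by
        rw [← Finset.card_pos, Finset.card_erase_of_mem hPS, hScard]
        have := hα2 j
        omega
      obtain ⟨t, ht⟩ := hSne
      have htT : t ∈ colNbr G ξ y j := (Finset.mem_erase.1 ht).2
      have htne : t ≠ Pp (n+1) := (Finset.mem_erase.1 ht).1
      have htadj : G.Adj (Pp (n+1)) t :=
        hSpair (by exact_mod_cast hPS) (by exact_mod_cast htT) (fun h => htne h.symm)
      have htcol : ξ t = co (n+1) := by rw [hcoN]; exact (mem_colNbr.1 htT).2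
      have htF : t ∈ (Ff n).erase (Pp (n+1)) := by
        rw [← hsidePN, mem_colNbr]
        exact ⟨htadj, htcol⟩
      have htK : t ∈ Kk (n+1) := by
        rw [hKdef]; exact Finset.mem_insert_of_mem (Finset.mem_erase.1 htF).2
      exact hprivN t htK htne y hy ((mem_colNbr.1 htT).1).symm
  -- the certificate for the new fan
  have hcertN : ∀ y ∈ Ff (n+1), ∃ T : Finset V,
      colNbr G ξ y (co (n+1)) = insert (Pp (n+1)) T ∧ Pp (n+1) ∉ T ∧
      T.card = α (co (n+1)) ∧ (T : Set V).Pairwise G.Adj := by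
    intro y hy
    have hbN : oc (n+1) ≠ Zζ (n+1) (Pp (n+1)) := by
      rw [hZNpN]; exact wocol_ne_wcol hij (n+1)
    obtain ⟨T, hT1, hT2, hT3, hT4⟩ :=
      cert_abs hα1 hsum hdeg hphimin hΩN hLCN' hpmemN hbN hy
    rw [hZNpN] at hT1 hT3
    refine ⟨T, ?_, hT2, hT3, hT4⟩
    rw [← hT1]
    ext w
    rw [mem_colNbr, mem_colNbr]
    constructor
    · rintro ⟨hadj, hcol⟩
      refine ⟨hadj, ?_⟩
      by_cases hfl : ∃ l, l < n+1 ∧ w = Pp l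
      · exfalso
        obtain ⟨l, hl, rfl⟩ := hfl
        exact hnoadjPN l hl y hy hadj.symm
      · push_neg at hfl
        rw [hunflipN w hfl, hcol]
    · rintro ⟨hadj, hcol⟩
      refine ⟨hadj, ?_⟩
      by_cases hfl : ∃ l, l < n+1 ∧ w = Pp l
      · exfalso
        obtain ⟨l, hl, rfl⟩ := hfl
        exact hnoadjPN l hl y hy hadj.symm
      · push_neg at hfl
        rw [← hunflipN w hfl, hcol]
  exact ⟨hΩN, hcliqN, hmonoN, hpmemN, hpcolN, hunflipN, hflipN, hfreshN, hnoadjPN,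
    hprivN, hprivCN, hcertN, hsideON, hsideCN⟩

end WalkStep

section Refute
variable {V : Type*} [Fintype V] [DecidableEq V] {G : SimpleGraph V} [DecidableRel G.Adj]
variable {k D : ℕ} {α : Fin k → ℕ} {ξ : V → Fin k} {i j : Fin k} {v₀ : V} {C₁ : Finset V}

variable (hα2 : ∀ m, 2 ≤ α m)
variable (hsum : ∑ m, α m = D) (hdeg : ∀ v, G.degree v ≤ D)
variable (hphimin : ∀ ψ, (∀ χ, Phi G α ψ ≤ Phi G α χ) →
      numLargeCliques G α ξ ≤ numLargeCliques G α ψ)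
variable (hmin : ∀ ψ, Phi G α ξ ≤ Phi G α ψ)
variable (hij : j ≠ i) (hv₀ : v₀ ∈ C₁) (hC₁ : G.IsNClique (α i + 1) C₁)
variable (hC₁col : ∀ v ∈ C₁, ξ v = i)

include hα2 hsum hdeg hphimin hmin hij hv₀ hC₁ hC₁col in
lemma branch2_false
    (hB2 : ∀ z ∈ C₁, z ≠ v₀ → ∀ y ∈ colNbr G ξ v₀ j, ¬ G.Adj z y) : False := by
  have hα1 : ∀ m, 1 ≤ α m := fun m => le_trans one_le_two (hα2 m)
  have hall : ∀ n, WInv G α ξ i j v₀ C₁ n := by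
    intro n
    induction n using Nat.strong_induction_on with
    | _ n ih =>
      match n with
      | 0 => exact winv_zero hα1 hsum hdeg hphimin hmin hij hv₀ hC₁ hC₁col hB2
      | (m+1) =>
        exact winv_step (n := m) hα1 hα2 hsum hdeg hphimin hmin hij hv₀ hC₁ hC₁col
          (fun l hl => ih l (by omega))
  obtain ⟨a, b, hne, hEq⟩ :=
    Finite.exists_ne_map_eq_of_infinite (fun n : ℕ => wp G ξ i j v₀ n)
  rcases lt_or_gt_of_ne hne with h | h
  · exact winv_pivot_ne hij (hall b) (hall a) h hEq.symm
  · exact winv_pivot_ne hij (hall a) (hall b) h hEq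
end Refute

section Endgame
variable {V : Type*} [Fintype V] [DecidableEq V] {G : SimpleGraph V} [DecidableRel G.Adj]
variable {k D : ℕ} {α : Fin k → ℕ} {ξ : V → Fin k}
variable (hα1 : ∀ m, 1 ≤ α m) (hsum : ∑ m, α m = D) (hdeg : ∀ v, G.degree v ≤ D)
variable (hphimin : ∀ ψ, (∀ χ, Phi G α ψ ≤ Phi G α χ) →
      numLargeCliques G α ξ ≤ numLargeCliques G α ψ)

include hα1 hsum hdeg hphimin in
lemma fan_pairwise {ζ : V → Fin k} (hΩ : IsOmega G α ξ ζ) {C : Finset V}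
    (hC : IsLargeClique G α ζ C) {x : V} (hx : x ∈ C) {b : Fin k} (hb : b ≠ ζ x) :
    ((colNbr G ζ x b : Finset V) : Set V).Pairwise G.Adj := by
  obtain ⟨-, hLC'⟩ := flip_good' hα1 hsum hdeg hphimin hΩ hC hx hb
  obtain ⟨mm, hcc, -⟩ := hLC'
  intro a ha b' hb' hab
  exact hcc.1 (Finset.mem_coe.2 (Finset.mem_insert_of_mem (by exact_mod_cast ha)))
    (Finset.mem_coe.2 (Finset.mem_insert_of_mem (by exact_mod_cast hb'))) hab

include hα1 hsum hdeg hphimin in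
lemma fan_member_side {ζ : V → Fin k} (hΩ : IsOmega G α ξ ζ) {C : Finset V}
    (hC : IsLargeClique G α ζ C) {x : V} (hx : x ∈ C) {b : Fin k} (hb : b ≠ ζ x)
    {w : V} (hw : w ∈ colNbr G ζ x b) :
    colNbr G ζ w b = (colNbr G ζ x b).erase w := by
  obtain ⟨hΩ', hLC'⟩ := flip_good' hα1 hsum hdeg hphimin hΩ hC hx hb
  set ζ' := Function.update ζ x b with hζ'
  have hwx : w ≠ x := fun h => not_self_mem_colNbr (h ▸ hw)
  have hwC' : w ∈ insert x (colNbr G ζ x b) := Finset.mem_insert_of_mem hw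
  have hζ'w : ζ' w = b := by
    rw [hζ', Function.update_of_ne hwx]; exact (mem_colNbr.1 hw).2
  have hprof := profile' hα1 hsum hdeg hΩ'.1 hLC' hwC'
  have h1 : colNbr G ζ' w b = (insert x (colNbr G ζ x b)).erase w := by
    have := hprof.1
    rwa [hζ'w] at this
  have h2 : colNbr G ζ w b = (colNbr G ζ' w b).erase x := by
    ext y
    rw [Finset.mem_erase]
    by_cases hyx : y = x
    · subst hyx
      simp only [mem_colNbr, ne_eq, not_true_eq_false, false_and, iff_false, not_and]
      intro _
      exact fun h => hb h.symm |>.elim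
    · rw [mem_colNbr_update_ne hyx]
      simp [hyx]
  rw [h2, h1]
  ext y
  simp only [Finset.mem_erase, Finset.mem_insert]
  constructor
  · rintro ⟨hyx, hyw, (rfl | hyS)⟩
    · exact absurd rfl hyx
    · exact ⟨hyw, hyS⟩
  · rintro ⟨hyw, hyS⟩
    exact ⟨fun h => not_self_mem_colNbr (h ▸ hyS), hyw, Or.inr hyS⟩
end Endgame

/-- **Proposition 4.** Let `ξ ∈ Ω` have at least one large clique, let `C₁` be a
large clique of color `i`, let `j ≠ i`, and let `G_{ij}` be the subgraph of `G` induced on the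
vertices colored `i` or `j`. Then the connected component of `G_{ij}` containing `C₁` is a
complete graph on `α_i + α_j + 1` vertices. -/
theorem large_clique_component_complete {V : Type*} [Fintype V] [DecidableEq V]
    (G : SimpleGraph V) [DecidableRel G.Adj] (D c : ℕ)
    (α : Fin (c + 1) → ℕ) (hα : ∀ i, 2 ≤ α i) (hsum : ∑ i, α i = D)
    (hdeg : ∀ v : V, G.degree v ≤ D) (hfree : G.CliqueFree (D + 1))
    (ξ : V → Fin (c + 1))
    (hmin : ∀ ψ : V → Fin (c + 1), Phi G α ξ ≤ Phi G α ψ)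
    (hphimin : ∀ ψ : V → Fin (c + 1), (∀ χ : V → Fin (c + 1), Phi G α ψ ≤ Phi G α χ) →
      numLargeCliques G α ξ ≤ numLargeCliques G α ψ)
    (hpos : 0 < numLargeCliques G α ξ)
    (i j : Fin (c + 1)) (hij : j ≠ i)
    (C₁ : Finset V) (hC₁ : G.IsNClique (α i + 1) C₁) (hC₁col : ∀ v ∈ C₁, ξ v = i)
    (v₀ : V) (hv₀ : v₀ ∈ C₁) (hv₀W : v₀ ∈ {v : V | ξ v = i ∨ ξ v = j}) :
    (G.induce {v : V | ξ v = i ∨ ξ v = j}).IsClique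
      ((G.induce {v : V | ξ v = i ∨ ξ v = j}).connectedComponentMk ⟨v₀, hv₀W⟩).supp ∧
    (((G.induce {v : V | ξ v = i ∨ ξ v = j}).connectedComponentMk ⟨v₀, hv₀W⟩).supp).ncard =
      α i + α j + 1 := by
  classical
  have hα1 : ∀ m, 1 ≤ α m := fun m => le_trans one_le_two (hα m)
  have hΩ0 : IsOmega G α ξ ξ := ⟨hmin, rfl⟩
  have hLC0 : IsLargeClique G α ξ C₁ := ⟨i, hC₁, hC₁col⟩
  have hξv₀ : ξ v₀ = i := hC₁col v₀ hv₀
  have hbv : j ≠ ξ v₀ := by rw [hξv₀]; exact hij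
  by_cases hB2 : ∀ z ∈ C₁, z ≠ v₀ → ∀ y ∈ colNbr G ξ v₀ j, ¬ G.Adj z y
  · exact (branch2_false hα hsum hdeg hphimin hmin hij hv₀ hC₁ hC₁col hB2).elim
  push_neg at hB2
  obtain ⟨u, huC, huv, w, hwS, hadj⟩ := hB2
  have hwAll : ∀ z' ∈ C₁, G.Adj w z' :=
    dichotomy hα1 hsum hdeg hphimin hΩ0 hLC0 hv₀ hbv hwS huC huv hadj
  -- the common fan S
  set S : Finset V := colNbr G ξ v₀ j with hSdef
  have hwj : ξ w = j := (mem_colNbr.1 hwS).2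
  have hSu : ∀ u' ∈ C₁, colNbr G ξ u' j = S := by
    intro u' hu'
    have hbu : j ≠ ξ u' := by rw [hC₁col u' hu']; exact hij
    have hwSu' : w ∈ colNbr G ξ u' j := mem_colNbr.2 ⟨(hwAll u' hu').symm, hwj⟩
    have h1 : colNbr G ξ w j = (colNbr G ξ u' j).erase w :=
      fan_member_side hα1 hsum hdeg hphimin hΩ0 hLC0 hu' hbu hwSu'
    have h2 : colNbr G ξ w j = S.erase w :=
      fan_member_side hα1 hsum hdeg hphimin hΩ0 hLC0 hv₀ hbv hwS
    calc colNbr G ξ u' j = insert w ((colNbr G ξ u' j).erase w) :=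
          (Finset.insert_erase hwSu').symm
      _ = insert w (S.erase w) := by rw [← h1, h2]
      _ = S := Finset.insert_erase hwS
  have hcross : ∀ u' ∈ C₁, ∀ w' ∈ S, G.Adj u' w' := by
    intro u' hu' w' hw'
    have : w' ∈ colNbr G ξ u' j := by rw [hSu u' hu']; exact hw'
    exact (mem_colNbr.1 this).1
  have hSi : ∀ w' ∈ S, colNbr G ξ w' i = C₁ := by
    intro w' hw'
    obtain ⟨T, hT1, hT2, hT3, hT4⟩ :=
      cert_abs hα1 hsum hdeg hphimin hΩ0 hLC0 hv₀ hbv hw'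
    rw [hξv₀] at hT1 hT3
    have hsub : C₁ ⊆ colNbr G ξ w' i := fun u' hu' =>
      mem_colNbr.2 ⟨(hcross u' hu' w' hw').symm, hC₁col u' hu'⟩
    have hcard : (colNbr G ξ w' i).card ≤ C₁.card := by
      rw [hT1, Finset.card_insert_of_notMem hT2, hT3, hC₁.2]
    exact (Finset.eq_of_subset_of_card_le hsub hcard).symm
  have hSj : ∀ w' ∈ S, colNbr G ξ w' j = S.erase w' := fun w' hw' =>
    fan_member_side hα1 hsum hdeg hphimin hΩ0 hLC0 hv₀ hbv hw'
  have hCi : ∀ u' ∈ C₁, colNbr G ξ u' i = C₁.erase u' := by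
    intro u' hu'
    have := (profile' hα1 hsum hdeg hmin hLC0 hu').1
    rwa [hC₁col u' hu'] at this
  have hSpair : ((S : Finset V) : Set V).Pairwise G.Adj :=
    fan_pairwise hα1 hsum hdeg hphimin hΩ0 hLC0 hv₀ hbv
  have hScol : ∀ w' ∈ S, ξ w' = j := fun w' hw' => (mem_colNbr.1 hw').2
  -- the closed clique K
  set K : Finset V := C₁ ∪ S with hKdef
  have hdisj : Disjoint C₁ S := by
    rw [Finset.disjoint_left]
    intro a haC haS
    have h1 := hC₁col a haC
    have h2 := hScol a haS
    rw [h1] at h2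
    exact hij h2.symm
  have hScard : S.card = α j := (profile' hα1 hsum hdeg hmin hLC0 hv₀).2 j
  have hKcard : K.card = α i + α j + 1 := by
    rw [hKdef, Finset.card_union_of_disjoint hdisj, hC₁.2, hScard]
    omega
  have hKW : ∀ x ∈ K, ξ x = i ∨ ξ x = j := by
    intro x hx
    rcases Finset.mem_union.1 hx with h | h
    · exact Or.inl (hC₁col x h)
    · exact Or.inr (hScol x h)
  have hKclique : ∀ a ∈ K, ∀ b ∈ K, a ≠ b → G.Adj a b := by
    intro a ha b hb hab
    rcases Finset.mem_union.1 ha with haC | haS <;> rcases Finset.mem_union.1 hb with hbC | hbS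
    · exact hC₁.1 (Finset.mem_coe.2 haC) (Finset.mem_coe.2 hbC) hab
    · exact hcross a haC b hbS
    · exact (hcross b hbC a haS).symm
    · exact hSpair (Finset.mem_coe.2 haS) (Finset.mem_coe.2 hbS) hab
  have hclosed : ∀ x ∈ K, ∀ y : V, G.Adj x y → (ξ y = i ∨ ξ y = j) → y ∈ K := by
    intro x hx y hadj' hcol
    rcases Finset.mem_union.1 hx with hxC | hxS
    · rcases hcol with h | h
      · have hmem : y ∈ colNbr G ξ x i := mem_colNbr.2 ⟨hadj', h⟩
        rw [hCi x hxC] at hmem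
        exact Finset.mem_union_left _ (Finset.mem_of_mem_erase hmem)
      · have hmem : y ∈ colNbr G ξ x j := mem_colNbr.2 ⟨hadj', h⟩
        rw [hSu x hxC] at hmem
        exact Finset.mem_union_right _ hmem
    · rcases hcol with h | h
      · have hmem : y ∈ colNbr G ξ x i := mem_colNbr.2 ⟨hadj', h⟩
        rw [hSi x hxS] at hmem
        exact Finset.mem_union_left _ hmem
      · have hmem : y ∈ colNbr G ξ x j := mem_colNbr.2 ⟨hadj', h⟩
        rw [hSj x hxS] at hmem
        exact Finset.mem_union_right _ (Finset.mem_of_mem_erase hmem)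
  -- the component
  have hv₀K : v₀ ∈ K := Finset.mem_union_left _ hv₀
  have hwalk : ∀ (a b : {v : V | ξ v = i ∨ ξ v = j}),
      (G.induce {v : V | ξ v = i ∨ ξ v = j}).Walk a b → (a : V) ∈ K → (b : V) ∈ K := by
    intro a b p
    induction p with
    | nil => exact id
    | @cons x y z h p ih =>
      intro hx
      apply ih
      have hGadj : G.Adj (x : V) (y : V) := h
      exact hclosed _ hx _ hGadj y.2
  have hsupp : ∀ x : {v : V | ξ v = i ∨ ξ v = j},
      ((G.induce {v : V | ξ v = i ∨ ξ v = j}).connectedComponentMk x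
        = (G.induce {v : V | ξ v = i ∨ ξ v = j}).connectedComponentMk ⟨v₀, hv₀W⟩)
      ↔ (x : V) ∈ K := by
    intro x
    constructor
    · intro h
      have hreach := (SimpleGraph.ConnectedComponent.eq.1 h.symm)
      obtain ⟨p⟩ := hreach
      exact hwalk _ _ p hv₀K
    · intro hxK
      by_cases hxv : (x : V) = v₀
      · have : x = ⟨v₀, hv₀W⟩ := Subtype.ext hxv
        rw [this]
      · apply SimpleGraph.ConnectedComponent.sound
        apply SimpleGraph.Adj.reachable
        show (G.induce {v : V | ξ v = i ∨ ξ v = j}).Adj x ⟨v₀, hv₀W⟩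
        exact hKclique _ hxK _ hv₀K hxv
  constructor
  · intro a ha b hb hab
    rw [SimpleGraph.ConnectedComponent.mem_supp_iff] at ha hb
    have haK := (hsupp a).1 ha
    have hbK := (hsupp b).1 hb
    show (G.induce {v : V | ξ v = i ∨ ξ v = j}).Adj a b
    exact hKclique _ haK _ hbK (fun h => hab (Subtype.ext h))
  · have hsuppEq : ((G.induce {v : V | ξ v = i ∨ ξ v = j}).connectedComponentMk
        ⟨v₀, hv₀W⟩).supp = Subtype.val ⁻¹' ((K : Finset V) : Set V) := by
      ext x
      rw [SimpleGraph.ConnectedComponent.mem_supp_iff]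
      rw [hsupp x]
      simp
    rw [hsuppEq]
    have himg : (Subtype.val : {v : V | ξ v = i ∨ ξ v = j} → V) ''
          ((Subtype.val : {v : V | ξ v = i ∨ ξ v = j} → V) ⁻¹' ((K : Finset V) : Set V))
        = ((K : Finset V) : Set V) := by
      rw [Set.image_preimage_eq_inter_range, Subtype.range_coe]
      apply Set.inter_eq_left.2
      intro x hx
      exact hKW x (by exact_mod_cast hx)
    calc ((Subtype.val : {v : V | ξ v = i ∨ ξ v = j} → V) ⁻¹' ((K : Finset V) : Set V)).ncard
        = ((Subtype.val : {v : V | ξ v = i ∨ ξ v = j} → V) ''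
            ((Subtype.val : {v : V | ξ v = i ∨ ξ v = j} → V) ⁻¹'
              ((K : Finset V) : Set V))).ncard :=
          (Set.ncard_image_of_injective _ Subtype.val_injective).symm
      _ = ((K : Finset V) : Set V).ncard := by rw [himg]
      _ = K.card := Set.ncard_coe_finset K
      _ = α i + α j + 1 := hKcard
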